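/- arXiv:2506.13527 — 2 statements merged into one kernel-verified Lean document; each statement's English description precedes it below -/
import Mathlib

section
/- Let D be a triangulated category that is 'local', i.e., the zero thick subcategory 0 is prime with minimal overcategory 0̄. Then for any nonzero object F ∈ D and any nonzero object p ∈ 0̄, we have Hom^*(F, p) ≠ 0, i.e., Hom(F, p[n]) ≠ 0 for some integer n. -/
/-!
Objects `X` with `Hom(X, p⟦n⟧) = 0` for all `n` form a thick subcategory (the left orthogonal of
the shifts of `p`). If `Hom^*(F, p) = 0`, it contains the nonzero object `F`, hence contains the
smallest such subcategory and so `p` itself; but then `𝟙 p = 0`.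
-/
open CategoryTheory Limits Pretriangulated

namespace Stmt7

variable {D : Type*} [Category D] [Preadditive D] [HasZeroObject D] [HasShift D ℤ]
  [∀ n : ℤ, (shiftFunctor D n).Additive] [Pretriangulated D]

namespace Triangulated

variable (D) in
/-- The structure `Triangulated.Subcategory` of the older Mathlib (removed since),
restated with its original fields. -/
structure Subcategory where
  P : D → Prop
  zero' : ∃ (Z : D) (_ : IsZero Z), P Z
  shift (X : D) (n : ℤ) : P X → P (X⟦n⟧)
  ext₂' (T : Triangle D) (_ : T ∈ distTriang D) : P T.obj₁ → P T.obj₃ →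
    ∃ (Y : D) (_ : P Y), Nonempty (T.obj₂ ≅ Y)

end Triangulated

/-- A thick subcategory: a triangulated subcategory closed under direct summands. -/
def IsThick (S : Triangulated.Subcategory D) : Prop :=
  ∀ ⦃X Y : D⦄ (i : X ⟶ Y) (r : Y ⟶ X), i ≫ r = 𝟙 X → S.P Y → S.P X

end Stmt7

namespace CategoryTheory.ObjectProperty

variable {C : Type*} [Category C] [HasZeroMorphisms C] (P : ObjectProperty C)

instance : P.leftOrthogonal.IsStableUnderRetracts where
  of_retract h hY _ f hZ := by
    rw [← Category.id_comp f, ← h.retract, Category.assoc, hY (h.r ≫ f) hZ, Limits.comp_zero]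

variable {P} in
lemma isZero_of_leftOrthogonal {X : C} (hX : P.leftOrthogonal X) (hPX : P X) : IsZero X :=
  (IsZero.iff_id_eq_zero X).2 (hX (𝟙 X) hPX)

lemma leftOrthogonal_shiftClosure_singleton_iff {A : Type*} [AddMonoid A] [HasShift C A]
    (p X : C) :
    ((singleton p).shiftClosure A).leftOrthogonal X ↔ ∀ (a : A) (f : X ⟶ p⟦a⟧), f = 0 := by
  constructor
  · intro hX a f
    exact hX f ⟨p, a, Iso.refl _, (singleton_iff p p).2 rfl⟩
  · rintro hX Y f ⟨_, a, e, ⟨⟩⟩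
    rw [← cancel_mono e.hom, Limits.zero_comp]
    exact hX a _

end CategoryTheory.ObjectProperty

namespace Stmt7

variable {D : Type*} [Category D] [Preadditive D] [HasZeroObject D] [HasShift D ℤ]
  [∀ n : ℤ, (shiftFunctor D n).Additive] [Pretriangulated D]

namespace Triangulated.Subcategory

def ofIsTriangulated (P : ObjectProperty D) [P.IsTriangulated] : Subcategory D where
  P := P
  zero' := let ⟨Z, hZ, hPZ⟩ := P.exists_prop_of_containsZero; ⟨Z, hZ, hPZ⟩
  shift X n hX := P.le_shift n X hX
  ext₂' T hT h₁ h₃ := P.ext_of_isTriangulatedClosed₂' T hT h₁ h₃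

end Triangulated.Subcategory

lemma isThick_ofIsTriangulated (P : ObjectProperty D) [P.IsTriangulated]
    [P.IsStableUnderRetracts] : IsThick (.ofIsTriangulated P) :=
  fun _ _ i r hir hY => P.prop_of_retract ⟨i, r, hir⟩ hY

theorem stmt7_general (Z : Triangulated.Subcategory D)
    (hZsmallest : ∀ S : Triangulated.Subcategory D, IsThick S →
      (∃ X : D, S.P X ∧ ¬ IsZero X) → Z.P ≤ S.P)
    (F : D) (hF : ¬ IsZero F) (p : D) (hp : Z.P p) (hp0 : ¬ IsZero p) :
    ∃ (n : ℤ) (f : F ⟶ p⟦n⟧), f ≠ 0 := by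
  by_contra! hFp
  let P := ((ObjectProperty.singleton p).shiftClosure ℤ).leftOrthogonal
  have hPF : P F := (ObjectProperty.leftOrthogonal_shiftClosure_singleton_iff p F).2 hFp
  have hPp : P p := hZsmallest _ (isThick_ofIsTriangulated P) ⟨F, hPF, hF⟩ p hp
  exact hp0 (ObjectProperty.isZero_of_leftOrthogonal hPp
    (ObjectProperty.le_shiftClosure _ _ ((ObjectProperty.singleton_iff p p).2 rfl)))

theorem stmt7 (Z : Triangulated.Subcategory D) (hZthick : IsThick Z)
    (hZnonzero : ∃ X : D, Z.P X ∧ ¬ IsZero X)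
    (hZsmallest : ∀ S : Triangulated.Subcategory D, IsThick S →
      (∃ X : D, S.P X ∧ ¬ IsZero X) → Z.P ≤ S.P)
    (F : D) (hF : ¬ IsZero F) (p : D) (hp : Z.P p) (hp0 : ¬ IsZero p) :
    ∃ (n : ℤ) (f : F ⟶ p⟦n⟧), f ≠ 0 :=
  stmt7_general Z hZsmallest F hF p hp hp0

end Stmt7
end

section
/- Let D be a triangulated category, p an object of D such that P_p := {F ∈ D : Hom(F, p[n]) = 0 for all n ∈ ℤ} is a prime thick subcategory and p lies in the minimal thick subcategory strictly containing P_p. Then P_p is a minimal prime thick subcategory: there is no prime thick subcategory Q with Q ⊊ P_p. -/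
/-!
Let `Q ⊊ P_p` be prime, with minimal thick overcategory `B`, and pick `q ∈ B \ Q`.
The objects `F` with `Hom^*_{D/Q}(q, F) = 0` form a thick subcategory containing `Q`; it cannot
strictly contain `Q`, for then it would contain `B ∋ q` and `q` would vanish in `D/Q`.  So
`Hom^*_{D/Q}(q, F) ≠ 0` for every `F ∉ Q`.  But `p ∉ Q` (indeed `p ∉ P_p`, as `p ≠ 0`), while
a morphism `q → p[n]` in `D/Q` is a roof out of an object of the thick subcategory generated by
`Q` and `q ∈ B ⊆ P_p`, all of whose maps to `p[n]` vanish.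
-/

open CategoryTheory Limits Pretriangulated

lemma isZero_of_forall_hom_shift_eq_zero {C : Type*} [Category C] [HasZeroMorphisms C]
    [HasShift C ℤ] {X : C} (hX : ∀ (n : ℤ) (f : X ⟶ X⟦n⟧), f = 0) :
    IsZero X := by
  rw [IsZero.iff_id_eq_zero]
  calc 𝟙 X = (shiftFunctorZero C ℤ).inv.app X ≫ (shiftFunctorZero C ℤ).hom.app X :=
        ((shiftFunctorZero C ℤ).inv_hom_id_app X).symm
    _ = 0 := by rw [hX 0 ((shiftFunctorZero C ℤ).inv.app X), zero_comp]

namespace Stmt8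

variable {D : Type*} [Category D] [Preadditive D] [HasZeroObject D] [HasShift D ℤ]
  [∀ n : ℤ, (shiftFunctor D n).Additive] [Pretriangulated D]

namespace Triangulated

/-- The December 2024 Mathlib `Triangulated.Subcategory` (removed since), with its old fields. -/
structure Subcategory (D : Type*) [Category D] [Preadditive D] [HasZeroObject D]
    [HasShift D ℤ] [∀ n : ℤ, (shiftFunctor D n).Additive] [Pretriangulated D] where
  P : D → Prop
  zero' : ∃ (Z : D) (_ : IsZero Z), P Z
  shift (X : D) (n : ℤ) : P X → P (X⟦n⟧)
  ext₂' (T : Triangle D) (_ : T ∈ distTriang D) : P T.obj₁ → P T.obj₃ →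
    ∃ (Y : D) (_ : P Y), Nonempty (T.obj₂ ≅ Y)

end Triangulated

def IsThick (S : Triangulated.Subcategory D) : Prop :=
  ∀ ⦃X Y : D⦄ (i : X ⟶ Y) (r : Y ⟶ X), i ≫ r = 𝟙 X → S.P Y → S.P X

def IsPrimeThick (P : Triangulated.Subcategory D) : Prop :=
  IsThick P ∧ ∃ B : Triangulated.Subcategory D,
    (IsThick B ∧ P.P < B.P) ∧
    ∀ J : Triangulated.Subcategory D, IsThick J → P.P < J.P → B.P ≤ J.P

variable {S Q : Triangulated.Subcategory D}

lemma IsThick.mem_of_iso (hS : IsThick S) {X Y : D} (e : X ≅ Y) (hY : S.P Y) : S.P X :=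
  hS e.hom e.inv e.hom_inv_id hY

lemma IsThick.mem_obj₂ (hS : IsThick S) {T : Triangle D} (hT : T ∈ distTriang D)
    (h₁ : S.P T.obj₁) (h₃ : S.P T.obj₃) : S.P T.obj₂ := by
  obtain ⟨Y, hY, ⟨e⟩⟩ := S.ext₂' T hT h₁ h₃
  exact hS.mem_of_iso e hY

lemma IsThick.mem_obj₁ (hS : IsThick S) {T : Triangle D} (hT : T ∈ distTriang D)
    (h₂ : S.P T.obj₂) (h₃ : S.P T.obj₃) : S.P T.obj₁ :=
  hS.mem_obj₂ (inv_rot_of_distTriang _ hT) (S.shift _ (-1) h₃) h₂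

lemma IsThick.mem_biprod (hS : IsThick S) {X Y : D} (hX : S.P X) (hY : S.P Y) :
    S.P (X ⊞ Y) :=
  hS.mem_obj₂ (binaryBiproductTriangle_distinguished X Y) hX hY

variable (S) in
def FactorsThrough {A X : D} (f : A ⟶ X) : Prop :=
  ∃ (c : D) (g : A ⟶ c) (h : c ⟶ X), S.P c ∧ f = g ≫ h

namespace FactorsThrough

variable {A X Y : D}

lemma of_mem_target (hX : S.P X) (f : A ⟶ X) : FactorsThrough S f :=
  ⟨X, f, 𝟙 X, hX, (Category.comp_id f).symm⟩

lemma of_eq_zero {f : A ⟶ X} (hf : f = 0) : FactorsThrough S f := by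
  obtain ⟨Z, -, hZ⟩ := S.zero'
  exact ⟨Z, 0, 0, hZ, by rw [hf, zero_comp]⟩

lemma comp {f : A ⟶ X} (hf : FactorsThrough S f) (k : X ⟶ Y) : FactorsThrough S (f ≫ k) := by
  obtain ⟨c, g, h, hc, rfl⟩ := hf
  exact ⟨c, g, h ≫ k, hc, Category.assoc _ _ _⟩

lemma add (hS : IsThick S) {f f' : A ⟶ X} (hf : FactorsThrough S f)
    (hf' : FactorsThrough S f') : FactorsThrough S (f + f') := by
  obtain ⟨c, g, h, hc, rfl⟩ := hf
  obtain ⟨c', g', h', hc', rfl⟩ := hf'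
  exact ⟨c ⊞ c', biprod.lift g g', biprod.desc h h', hS.mem_biprod hc hc',
    by rw [biprod.lift_desc]⟩

lemma of_comp_mor₂ (hS : IsThick S) {T : Triangle D} (hT : T ∈ distTriang D)
    (h₁ : S.P T.obj₁) {f : A ⟶ T.obj₂} (hf : FactorsThrough S (f ≫ T.mor₂)) :
    FactorsThrough S f := by
  obtain ⟨c, g, ρ, hc, hfg⟩ := hf
  obtain ⟨c', w, z, hT'⟩ := distinguished_cocone_triangle₁ (ρ ≫ T.mor₃)
  have hc' : S.P c' := hS.mem_obj₁ hT' hc (S.shift _ 1 h₁)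
  have hwρ : w ≫ ρ ≫ T.mor₃ = 0 := comp_distTriang_mor_zero₁₂ _ hT'
  obtain ⟨l, hl⟩ := Triangle.coyoneda_exact₃ T hT (w ≫ ρ) (by rw [Category.assoc, hwρ])
  have hgρ : g ≫ ρ ≫ T.mor₃ = 0 := by
    rw [← Category.assoc, ← hfg, Category.assoc, comp_distTriang_mor_zero₂₃ _ hT, comp_zero]
  obtain ⟨g', rfl⟩ : ∃ g' : A ⟶ c', g = g' ≫ w := Triangle.coyoneda_exact₂ _ hT' g hgρ
  obtain ⟨h₀, hh₀⟩ := Triangle.coyoneda_exact₂ T hT (f - g' ≫ l) (by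
    rw [Preadditive.sub_comp, hfg, Category.assoc, hl, Category.assoc, sub_self])
  rw [← sub_add_cancel f (g' ≫ l), hh₀]
  exact ((of_mem_target h₁ h₀).comp _).add hS ⟨c', g', l, hc', rfl⟩

end FactorsThrough

section QuotientOrthogonal

variable (Q) (q : D)

def HasConeIn {A B : D} (φ : A ⟶ B) : Prop :=
  ∃ (c : D) (u : B ⟶ c) (v : c ⟶ A⟦(1 : ℤ)⟧), Q.P c ∧ Triangle.mk φ u v ∈ distTriang D

def IsCover (A : D) : Prop :=
  Relation.ReflTransGen (fun X Y => ∃ φ : X ⟶ Y, HasConeIn Q φ) A q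

def FactorsOnCovers (X : D) : Prop :=
  ∀ A : D, IsCover Q q A → ∀ f : A ⟶ X, FactorsThrough Q f

/-- `Hom^*_{D/Q}(q, F) = 0`, phrased without the Verdier quotient: a morphism `q → F⟦n⟧` of
`D/Q` is a roof `q ← A → F⟦n⟧` with `A` a cover of `q`, and it vanishes iff its second leg
factors through `Q`. -/
def QuotientOrthogonal (F : D) : Prop :=
  ∀ n : ℤ, FactorsOnCovers Q q (F⟦n⟧)

variable {Q q}

lemma IsCover.mem (hS : IsThick S) (hQS : Q.P ≤ S.P) (hq : S.P q) {A : D}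
    (hA : IsCover Q q A) : S.P A := by
  induction hA using Relation.ReflTransGen.head_induction_on with
  | refl => exact hq
  | head h _ ih =>
    obtain ⟨φ, c, u, v, hc, hT⟩ := h
    exact hS.mem_obj₁ hT ih (hQS c hc)

lemma FactorsOnCovers.obj₂ (hQ : IsThick Q) {T : Triangle D} (hT : T ∈ distTriang D)
    (h₁ : FactorsOnCovers Q q T.obj₁) (h₃ : FactorsOnCovers Q q T.obj₃) :
    FactorsOnCovers Q q T.obj₂ := by
  intro A hA f
  obtain ⟨c, g, h, hc, hfg⟩ := h₃ A hA (f ≫ T.mor₂)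
  -- on the fibre `A'` of `g`, again a cover of `q`, the map `f` lifts to `T.obj₁`
  obtain ⟨A', σ, z, hσ⟩ := distinguished_cocone_triangle₁ g
  have hA' : IsCover Q q A' := .head ⟨σ, c, g, z, hc, hσ⟩ hA
  have hσg : σ ≫ g = 0 := comp_distTriang_mor_zero₁₂ _ hσ
  obtain ⟨e, he⟩ : ∃ e : A' ⟶ T.obj₁, σ ≫ f = e ≫ T.mor₁ :=
    Triangle.coyoneda_exact₂ T hT (σ ≫ f) (by rw [Category.assoc, hfg, ← Category.assoc, hσg,
      zero_comp])
  obtain ⟨c', γ, δ, hc', rfl⟩ := h₁ A' hA' e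
  obtain ⟨R, r, t, hR⟩ := distinguished_cocone_triangle (δ ≫ T.mor₁)
  have hδr : (δ ≫ T.mor₁) ≫ r = 0 := comp_distTriang_mor_zero₁₂ _ hR
  have hσfr : σ ≫ f ≫ r = 0 := by
    rw [← Category.assoc, he, Category.assoc, Category.assoc, ← Category.assoc δ, hδr, comp_zero]
  obtain ⟨ρ, hρ⟩ : ∃ ρ : c ⟶ R, f ≫ r = g ≫ ρ := Triangle.yoneda_exact₂ _ hσ (f ≫ r) hσfr
  exact FactorsThrough.of_comp_mor₂ hQ hR hc' ⟨c, g, ρ, hc, hρ⟩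

namespace QuotientOrthogonal

lemma of_mem {F : D} (hF : Q.P F) : QuotientOrthogonal Q q F :=
  fun n _ _ f => .of_mem_target (Q.shift F n hF) f

lemma shift {F : D} (hF : QuotientOrthogonal Q q F) (m : ℤ) :
    QuotientOrthogonal Q q (F⟦m⟧) := by
  intro n A hA f
  have e := (shiftFunctorAdd D m n).app F
  simpa using (hF (m + n) A hA (f ≫ e.inv)).comp e.hom

lemma of_retract {X Y : D} (i : X ⟶ Y) (r : Y ⟶ X) (hir : i ≫ r = 𝟙 X)
    (hY : QuotientOrthogonal Q q Y) : QuotientOrthogonal Q q X := by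
  intro n A hA f
  have := (hY n A hA (f ≫ (shiftFunctor D n).map i)).comp ((shiftFunctor D n).map r)
  rwa [Category.assoc, ← CategoryTheory.Functor.map_comp, hir, CategoryTheory.Functor.map_id,
    Category.comp_id] at this

lemma ext₂ (hQ : IsThick Q) {T : Triangle D} (hT : T ∈ distTriang D)
    (h₁ : QuotientOrthogonal Q q T.obj₁) (h₃ : QuotientOrthogonal Q q T.obj₃) :
    QuotientOrthogonal Q q T.obj₂ :=
  fun n => FactorsOnCovers.obj₂ hQ (T.shift_distinguished hT n) (h₁ n) (h₃ n)

end QuotientOrthogonal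

variable (Q q) in
def quotientOrthogonalSubcategory (hQ : IsThick Q) : Triangulated.Subcategory D where
  P := QuotientOrthogonal Q q
  zero' := by
    obtain ⟨Z, hZ, hQZ⟩ := Q.zero'
    exact ⟨Z, hZ, .of_mem hQZ⟩
  shift _ m hX := hX.shift m
  ext₂' T hT h₁ h₃ := ⟨T.obj₂, .ext₂ hQ hT h₁ h₃, ⟨Iso.refl _⟩⟩

lemma isThick_quotientOrthogonalSubcategory (hQ : IsThick Q) :
    IsThick (quotientOrthogonalSubcategory Q q hQ) :=
  fun _ _ i r hir hY => .of_retract i r hir hY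

lemma mem_of_quotientOrthogonal {B : Triangulated.Subcategory D} (hQ : IsThick Q)
    (hB : ∀ J : Triangulated.Subcategory D, IsThick J → Q.P < J.P → B.P ≤ J.P)
    (hqB : B.P q) (hqQ : ¬ Q.P q) {F : D} (hF : QuotientOrthogonal Q q F) : Q.P F := by
  by_contra hFQ
  have hQJ : Q.P < QuotientOrthogonal Q q :=
    lt_of_le_not_ge (fun _ => .of_mem) fun h => hFQ (h F hF)
  obtain ⟨c, g, h, hc, hid⟩ := hB _ (isThick_quotientOrthogonalSubcategory hQ) hQJ q hqB 0 q
    .refl ((shiftFunctorZero D ℤ).inv.app q)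
  refine hqQ (hQ g (h ≫ (shiftFunctorZero D ℤ).hom.app q) ?_ hc)
  rw [← Category.assoc, ← hid, Iso.inv_hom_id_app]
  rfl

end QuotientOrthogonal

theorem stmt8_general (p : D) (P Pbar : Triangulated.Subcategory D)
    (hPdef : ∀ F : D, P.P F ↔ ∀ (n : ℤ) (f : F ⟶ p⟦n⟧), f = 0)
    (hPthick : IsThick P)
    (hPbar : (IsThick Pbar ∧ P.P < Pbar.P) ∧
      ∀ J : Triangulated.Subcategory D, IsThick J → P.P < J.P → Pbar.P ≤ J.P) :
    ¬ ∃ Q : Triangulated.Subcategory D, IsPrimeThick Q ∧ Q.P < P.P := by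
  rintro ⟨Q, ⟨hQ, B, ⟨-, hQB⟩, hBmin⟩, hQP⟩
  have hpP : ¬ P.P p := fun hp => hPbar.1.2.not_ge fun F _ => (hPdef F).2 fun n _ =>
    ((shiftFunctor D n).map_isZero
      (isZero_of_forall_hom_shift_eq_zero ((hPdef p).1 hp))).eq_of_tgt _ _
  obtain ⟨q, hqB, hqQ⟩ := Set.exists_of_ssubset hQB
  have hqP : P.P q := hBmin P hPthick hQP q hqB
  have hpQ : QuotientOrthogonal Q q p := fun n A hA f =>
    .of_eq_zero ((hPdef A).1 (hA.mem hPthick hQP.le hqP) n f)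
  exact hpP (hQP.le p (mem_of_quotientOrthogonal hQ hBmin hqB hqQ hpQ))

theorem stmt8 (p : D) (P Pbar : Triangulated.Subcategory D)
    (hPdef : ∀ F : D, P.P F ↔ ∀ (n : ℤ) (f : F ⟶ p⟦n⟧), f = 0)
    (hPthick : IsThick P)
    (hPbar : (IsThick Pbar ∧ P.P < Pbar.P) ∧
      ∀ J : Triangulated.Subcategory D, IsThick J → P.P < J.P → Pbar.P ≤ J.P)
    (hppbar : Pbar.P p) :
    ¬ ∃ Q : Triangulated.Subcategory D, IsPrimeThick Q ∧ Q.P < P.P :=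
  stmt8_general p P Pbar hPdef hPthick hPbar

end Stmt8
end
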